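/- arXiv:1705.08292 — 5 statements merged into one kernel-verified Lean document; each statement's English description precedes it below -/
import Mathlib

section
/- Suppose X ∈ ℝ^{n×d}, y ∈ ℝⁿ, every component of Xᵀy is nonzero, and there exists a scalar c with X·sign(Xᵀy) = c·y. Consider the AdaGrad-type iteration w_{k+1} = w_k − α_k H_k⁻¹ g_k with w₀ = 0, where g_k = Xᵀ(Xw_k − y) and H_k = diag((Σ_{s≤k} η_s g_s ∘ g_s)^{1/2}) with all η_s > 0 and step sizes α_k. Then for every k there exists a scalar λ_k such that w_k = λ_k · sign(Xᵀy). -/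
open Finset in
/-- For the AdaGrad-type iteration on least squares, if every component of `Xᵀ y` is
nonzero and `X · sign(Xᵀ y) = c • y`, then every iterate is a scalar multiple of
`sign(Xᵀ y)`. -/
theorem adagrad_iterates_sign {n d : ℕ} (X : Matrix (Fin n) (Fin d) ℝ) (y : Fin n → ℝ)
    (c : ℝ)
    (hnz : ∀ j, X.transpose.mulVec y j ≠ 0)
    (hc : X.mulVec (fun j => Real.sign (X.transpose.mulVec y j)) = c • y)
    (η α : ℕ → ℝ) (hη : ∀ s, 0 < η s)
    (w g : ℕ → Fin d → ℝ)
    (hg : ∀ k, g k = X.transpose.mulVec (X.mulVec (w k) - y))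
    (hH : ∀ k j, 0 < ∑ s ∈ range (k + 1), η s * (g s j) ^ 2)
    (hw0 : w 0 = 0)
    (hstep : ∀ k j, w (k + 1) j =
      w k j - α k * (g k j / Real.sqrt (∑ s ∈ range (k + 1), η s * (g s j) ^ 2))) :
    ∀ k, ∃ lam : ℝ, w k = lam • fun j => Real.sign (X.transpose.mulVec y j) := by
  set v : Fin d → ℝ := X.transpose.mulVec y with hv
  set sgn : Fin d → ℝ := fun j => Real.sign (v j) with hsgn
  -- if w k is lam • sgn then g k = (lam*c - 1) • v
  have hgk : ∀ k lam, w k = lam • sgn → g k = (lam * c - 1) • v := by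
    intro k lam hwk
    rw [hg k, hwk]
    have h1 : X.mulVec (lam • sgn) = lam • (c • y) := by
      rw [Matrix.mulVec_smul, hc]
    rw [h1]
    have h2 : lam • (c • y) - y = (lam * c - 1) • y := by
      funext i; simp [sub_mul, mul_assoc]
    rw [h2, Matrix.mulVec_smul, hv]
  have main : ∀ k, ∀ m ≤ k, ∃ lam : ℝ, w m = lam • sgn := by
    intro k
    induction k with
    | zero =>
      intro m hm
      interval_cases m
      exact ⟨0, by rw [hw0]; simp⟩
    | succ k ih =>
      intro m hm
      rcases Nat.eq_or_lt_of_le hm with rfl | h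
      · -- the inductive step
        choose lam hlam using ih
        set μ : ℕ → ℝ := fun s => if h : s ≤ k then lam s h * c - 1 else 0 with hμdef
        have hgs : ∀ s, s ≤ k → g s = μ s • v := by
          intro s hs
          have : μ s = lam s hs * c - 1 := by simp [hμdef, dif_pos hs]
          rw [this]
          exact hgk s _ (hlam s hs)
        set S : ℝ := ∑ s ∈ range (k + 1), η s * (μ s) ^ 2 with hS
        have hsum : ∀ j, ∑ s ∈ range (k + 1), η s * (g s j) ^ 2 = S * (v j) ^ 2 := by
          intro j
          rw [hS, Finset.sum_mul]
          refine Finset.sum_congr rfl fun s hs => ?_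
          have hs' : s ≤ k := Nat.lt_succ_iff.mp (Finset.mem_range.mp hs)
          rw [hgs s hs']
          simp only [Pi.smul_apply, smul_eq_mul]
          ring
        refine ⟨lam k le_rfl - α k * μ k / Real.sqrt S, ?_⟩
        funext j
        have hvj : v j ≠ 0 := hnz j
        have hSpos : 0 < S := by
          have h1 := hH k j
          rw [hsum j] at h1
          nlinarith [sq_nonneg (v j)]
        have hwkj : w k j = lam k le_rfl * sgn j := by
          have := congrFun (hlam k le_rfl) j
          simpa using this
        have hgkj : g k j = μ k * v j := by
          have := congrFun (hgs k le_rfl) j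
          simpa using this
        have hsqrt : Real.sqrt (S * (v j) ^ 2) = Real.sqrt S * |v j| := by
          rw [Real.sqrt_mul hSpos.le, Real.sqrt_sq_eq_abs]
        have habs : |v j| ≠ 0 := abs_ne_zero.mpr hvj
        have hsqS : Real.sqrt S ≠ 0 := ne_of_gt (Real.sqrt_pos.mpr hSpos)
        have hdiv : v j / |v j| = sgn j := by
          rcases lt_trichotomy (v j) 0 with h | h | h
          · rw [abs_of_neg h, div_neg, div_self hvj]
            simp [hsgn, Real.sign_of_neg h]
          · exact absurd h hvj
          · rw [abs_of_pos h, div_self hvj]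
            simp [hsgn, Real.sign_of_pos h]
        have key : μ k * v j / (Real.sqrt S * |v j|) = μ k / Real.sqrt S * sgn j := by
          rw [← hdiv]
          field_simp
        rw [hstep k j, hsum j, hsqrt, hwkj, hgkj, key]
        simp only [Pi.smul_apply, smul_eq_mul]
        ring
      · exact ih m (Nat.lt_succ_iff.mp h)
  exact fun k => main k k le_rfl
end

section
/- Under the hypotheses of the previous statement with the general adaptive momentum update w_{k+1} = w_k − α_k H_k⁻¹ ∇R_S(w_k + γ_k(w_k − w_{k−1})) + β_k H_k⁻¹ H_{k−1}(w_k − w_{k−1}) initialized at w₀ = w₋₁ = 0, every iterate w_k is a scalar multiple of sign(Xᵀy). -/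
/-!
Inductively every iterate lies on the line `ℝ ∙ sign(Xᵀ y)`. Then so does the extrapolated point,
and `X · sign(Xᵀ y) = c • y` makes every gradient a multiple of `Xᵀ y`. Consequently the
accumulated squared gradients in coordinate `j` factor as `(Xᵀ y)_j ² · T` with `T` independent
of `j`, so the diagonal preconditioner rescales `(Xᵀ y)_j` to `sign (Xᵀ y)_j` and the momentum
factor `√(H_{k-1})_j / √(H_k)_j` does not depend on `j`.
-/

open Finset Matrix Submodule

theorem Real.sign_eq_div_abs (r : ℝ) : Real.sign r = r / |r| := by
  rcases lt_trichotomy r 0 with h | rfl | h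
  · rw [Real.sign_of_neg h, abs_of_neg h, div_neg, div_self h.ne]
  · simp
  · rw [Real.sign_of_pos h, abs_of_pos h, div_self h.ne']

theorem Real.sqrt_sq_mul (a T : ℝ) : √(a ^ 2 * T) = |a| * √T := by
  rw [Real.sqrt_mul (sq_nonneg a), Real.sqrt_sq_eq_abs]

theorem Real.mul_div_sqrt_sq_mul (t a T : ℝ) : t * a / √(a ^ 2 * T) = t / √T * Real.sign a := by
  rw [Real.sqrt_sq_mul, Real.sign_eq_div_abs, mul_comm |a|, mul_div_mul_comm]

theorem Real.sqrt_sq_mul_div_sqrt_sq_mul_mul_sign (a T₀ T₁ μ : ℝ) :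
    √(a ^ 2 * T₀) / √(a ^ 2 * T₁) * (μ * Real.sign a) = √T₀ / √T₁ * μ * Real.sign a := by
  rcases eq_or_ne a 0 with rfl | ha
  · simp
  · rw [Real.sqrt_sq_mul, Real.sqrt_sq_mul, mul_div_mul_left _ _ (abs_pos.mpr ha).ne', mul_assoc]

theorem Matrix.transpose_mulVec_residual_mem_span {m n : Type*} [Fintype m] [Fintype n]
    (X : Matrix m n ℝ) {y : m → ℝ} {s : n → ℝ} {c : ℝ} (hc : X *ᵥ s = c • y) {v : n → ℝ}
    (hv : v ∈ ℝ ∙ s) : Xᵀ *ᵥ (X *ᵥ v - y) ∈ ℝ ∙ (Xᵀ *ᵥ y) := by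
  obtain ⟨μ, rfl⟩ := mem_span_singleton.mp hv
  refine mem_span_singleton.mpr ⟨μ * c - 1, ?_⟩
  rw [← mulVec_smul, sub_smul, one_smul, mulVec_smul, hc, smul_smul]

theorem exists_sum_mul_sq_eq_sq_mul {ι : Type*} (η : ℕ → ℝ) {g : ℕ → ι → ℝ} {a : ι → ℝ}
    {K : ℕ} (h : ∀ s < K, g s ∈ ℝ ∙ a) :
    ∃ T : ℝ, ∀ j, ∑ s ∈ range K, η s * g s j ^ 2 = a j ^ 2 * T := by
  induction K with
  | zero => exact ⟨0, by simp⟩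
  | succ K ih =>
    obtain ⟨T, hT⟩ := ih fun s hs => h s (by omega)
    obtain ⟨t, ht⟩ := mem_span_singleton.mp (h K K.lt_succ_self)
    refine ⟨T + η K * t ^ 2, fun j => ?_⟩
    rw [sum_range_succ, hT, ← ht, Pi.smul_apply, smul_eq_mul]
    ring

theorem adaptive_momentum_step_mem_span_sign {ι : Type*} {a g S₀ S₁ w v w' : ι → ℝ}
    {T₀ T₁ α β : ℝ} (hg : g ∈ ℝ ∙ a) (hS₀ : ∀ j, S₀ j = a j ^ 2 * T₀)
    (hS₁ : ∀ j, S₁ j = a j ^ 2 * T₁) (hw : w ∈ ℝ ∙ fun j => Real.sign (a j))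
    (hv : v ∈ ℝ ∙ fun j => Real.sign (a j))
    (hstep : ∀ j, w' j = w j - α * (g j / √(S₁ j)) + β * (√(S₀ j) / √(S₁ j)) * v j) :
    w' ∈ ℝ ∙ fun j => Real.sign (a j) := by
  obtain ⟨t, rfl⟩ := mem_span_singleton.mp hg
  obtain ⟨μ, rfl⟩ := mem_span_singleton.mp hv
  have hw' : w' = w - (α * (t / √T₁)) • (fun j => Real.sign (a j))
      + (β * (√T₀ / √T₁ * μ)) • (fun j => Real.sign (a j)) := by
    funext j
    simp only [hstep j, hS₀ j, hS₁ j, Pi.add_apply, Pi.sub_apply, Pi.smul_apply, smul_eq_mul,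
      Real.mul_div_sqrt_sq_mul, mul_assoc β, Real.sqrt_sq_mul_div_sqrt_sq_mul_mul_sign]
    ring
  rw [hw']
  exact add_mem (sub_mem hw (smul_mem _ _ (mem_span_singleton_self _)))
    (smul_mem _ _ (mem_span_singleton_self _))

open Finset in
theorem adaptive_momentum_iterates_sign_general {n d : ℕ} (X : Matrix (Fin n) (Fin d) ℝ)
    (y : Fin n → ℝ) (c : ℝ)
    (hc : X.mulVec (fun j => Real.sign (X.transpose.mulVec y j)) = c • y)
    (η α β γ : ℕ → ℝ)
    (w g : ℕ → Fin d → ℝ)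
    (hg : ∀ k, g k =
      X.transpose.mulVec (X.mulVec (w k + γ k • (w k - w (k - 1))) - y))
    (hw0 : w 0 = 0)
    (hstep : ∀ k j, w (k + 1) j =
      w k j - α k * (g k j / Real.sqrt (∑ s ∈ range (k + 1), η s * (g s j) ^ 2))
        + β k * (Real.sqrt (∑ s ∈ range k, η s * (g s j) ^ 2) /
            Real.sqrt (∑ s ∈ range (k + 1), η s * (g s j) ^ 2)) * (w k j - w (k - 1) j)) :
    ∀ k, ∃ lam : ℝ, w k = lam • fun j => Real.sign (X.transpose.mulVec y j) := by
  suffices h : ∀ k, w k ∈ ℝ ∙ fun j => Real.sign ((Xᵀ *ᵥ y) j) from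
    fun k => (mem_span_singleton.mp (h k)).imp fun _ => Eq.symm
  intro k
  induction k using Nat.strong_induction_on with
  | _ k ih =>
    cases k with
    | zero => rw [hw0]; exact zero_mem _
    | succ k =>
      have hdiff : ∀ m ≤ k, w m - w (m - 1) ∈ ℝ ∙ fun j => Real.sign ((Xᵀ *ᵥ y) j) :=
        fun m hm => sub_mem (ih m (by omega)) (ih (m - 1) (by omega))
      have hgrad : ∀ m < k + 1, g m ∈ ℝ ∙ (Xᵀ *ᵥ y) := fun m hm => by
        rw [hg m]
        exact X.transpose_mulVec_residual_mem_span hc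
          (add_mem (ih m hm) (smul_mem _ _ (hdiff m (by omega))))
      obtain ⟨T₀, hT₀⟩ := exists_sum_mul_sq_eq_sq_mul η fun m (hm : m < k) => hgrad m (by omega)
      obtain ⟨T₁, hT₁⟩ := exists_sum_mul_sq_eq_sq_mul η hgrad
      exact adaptive_momentum_step_mem_span_sign (hgrad k k.lt_succ_self) hT₀ hT₁
        (ih k k.lt_succ_self) (hdiff k le_rfl) (hstep k)

open Finset in
/-- For the general adaptive momentum update
`w_{k+1} = w_k − α_k H_k⁻¹ ∇R_S(w_k + γ_k (w_k − w_{k−1})) + β_k H_k⁻¹ H_{k−1} (w_k − w_{k−1})`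
initialized at `w₀ = w₋₁ = 0` (here `w (k-1)` uses truncated subtraction so that
`w₋₁ = w₀ = 0`), with `R_S(w) = ½‖Xw − y‖²`, every component of `Xᵀ y` nonzero and
`X · sign(Xᵀ y) = c • y`, every iterate is a scalar multiple of `sign(Xᵀ y)`. -/
theorem adaptive_momentum_iterates_sign {n d : ℕ} (X : Matrix (Fin n) (Fin d) ℝ)
    (y : Fin n → ℝ) (c : ℝ)
    (hnz : ∀ j, X.transpose.mulVec y j ≠ 0)
    (hc : X.mulVec (fun j => Real.sign (X.transpose.mulVec y j)) = c • y)
    (η α β γ : ℕ → ℝ) (hη : ∀ s, 0 < η s)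
    (w g : ℕ → Fin d → ℝ)
    (hg : ∀ k, g k =
      X.transpose.mulVec (X.mulVec (w k + γ k • (w k - w (k - 1))) - y))
    (hH : ∀ k j, 0 < ∑ s ∈ range (k + 1), η s * (g s j) ^ 2)
    (hw0 : w 0 = 0)
    (hstep : ∀ k j, w (k + 1) j =
      w k j - α k * (g k j / Real.sqrt (∑ s ∈ range (k + 1), η s * (g s j) ^ 2))
        + β k * (Real.sqrt (∑ s ∈ range k, η s * (g s j) ^ 2) /
            Real.sqrt (∑ s ∈ range (k + 1), η s * (g s j) ^ 2)) * (w k j - w (k - 1) j)) :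
    ∀ k, ∃ lam : ℝ, w k = lam • fun j => Real.sign (X.transpose.mulVec y j) :=
  adaptive_momentum_iterates_sign_general X y c hc η α β γ w g hg hw0 hstep
end

section
/- In the generative model where each example x_i ∈ ℝ^{3+5n} has x_{i,1} = y_i, x_{i,2} = x_{i,3} = 1, and x_{i,j} = 1 for j = 4+5(i−1), …, 4+5(i−1)+2(1−y_i) (zero otherwise), with labels y_i ∈ {−1, 1}, the vector u = Xᵀy satisfies ⟨sign(u), x_i⟩ = 4y_i for every example i. In particular X·sign(Xᵀy) = 4y, so the hypothesis of the adaptive-methods lemma holds with c = 4. -/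
/-- The data matrix of the generative model: example `i` (0-indexed) has its label in
coordinate 0, ones in coordinates 1 and 2, and ones in its block of unique features
`3 + 5 i, …, 3 + 5 i + 2 (1 − y_i)` (i.e. 1 unique feature if `y_i = 1`, 5 if `y_i = −1`);
all other coordinates are 0. -/
noncomputable def dataX (n : ℕ) (y : Fin n → ℝ) : Matrix (Fin n) (Fin (3 + 5 * n)) ℝ :=
  fun i j =>
    if (j : ℕ) = 0 then y i
    else if (j : ℕ) = 1 ∨ (j : ℕ) = 2 then 1
    else if 3 + 5 * (i : ℕ) ≤ (j : ℕ) ∧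
        (j : ℕ) ≤ 3 + 5 * (i : ℕ) + (if y i = 1 then 0 else 4) then 1
    else 0

/-!
Write `u = Xᵀ y`. The label coordinate gives `u₀ = ∑ yᵢ² = n > 0` and the two shared
coordinates give `u₁ = u₂ = ∑ yᵢ > 0`, so `sign u` is `1` there. Every unique feature occurs in a
single example `i`, so there `u = yᵢ` and `sign u = yᵢ`. Hence
`⟨sign u, xᵢ⟩ = yᵢ + 2 + (size of the block of i) · yᵢ`, which is `1 + 2 + 1 = 4` when `yᵢ = 1`
and `-1 + 2 - 5 = -4` when `yᵢ = -1`.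
-/

open Finset Matrix

theorem Fin.sum_ite_val_mem {M : Type*} [AddCommMonoid M] {m : ℕ} {S : Finset ℕ}
    (hS : ∀ k ∈ S, k < m) (a : M) :
    ∑ j : Fin m, (if (j : ℕ) ∈ S then a else 0) = #S • a := by
  rw [Fin.sum_univ_eq_sum_range (fun k => if k ∈ S then a else 0), sum_ite_mem,
    inter_eq_right.mpr fun k hk => mem_range.mpr (hS k hk), Finset.sum_const]

theorem Real.sign_eq_self_of_eq_one_or_eq_neg_one {a : ℝ} (ha : a = 1 ∨ a = -1) :
    Real.sign a = a := by
  rcases ha with rfl | rfl <;> simp [Real.sign_neg]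

section DataX

variable {n : ℕ} {y : Fin n → ℝ}

noncomputable def featureBlock (y : Fin n → ℝ) (i : Fin n) : Finset ℕ :=
  Icc (3 + 5 * (i : ℕ)) (3 + 5 * (i : ℕ) + if y i = 1 then 0 else 4)

theorem dataX_apply (i : Fin n) (j : Fin (3 + 5 * n)) :
    dataX n y i j =
      if (j : ℕ) = 0 then y i
      else if (j : ℕ) = 1 ∨ (j : ℕ) = 2 then 1
      else if (j : ℕ) ∈ featureBlock y i then 1
      else 0 := by
  simp only [dataX, featureBlock, mem_Icc]

theorem three_le_of_mem_featureBlock {i : Fin n} {k : ℕ} (hk : k ∈ featureBlock y i) :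
    3 ≤ k := by
  have := (mem_Icc.mp hk).1
  omega

theorem lt_of_mem_featureBlock {i : Fin n} {k : ℕ} (hk : k ∈ featureBlock y i) :
    k < 3 + 5 * n := by
  have hi := i.isLt
  have hc : (if y i = 1 then 0 else 4) ≤ 4 := by split <;> omega
  have := (mem_Icc.mp hk).2
  omega

theorem eq_of_mem_featureBlock {i i' : Fin n} {k : ℕ} (hk : k ∈ featureBlock y i)
    (hk' : k ∈ featureBlock y i') : i = i' := by
  rw [featureBlock, mem_Icc] at hk hk'
  have hc : (if y i = 1 then 0 else 4) ≤ 4 := by split <;> omega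
  have hc' : (if y i' = 1 then 0 else 4) ≤ 4 := by split <;> omega
  ext
  omega

theorem card_featureBlock (i : Fin n) : #(featureBlock y i) = if y i = 1 then 1 else 5 := by
  rw [featureBlock, Nat.card_Icc]
  split <;> omega

theorem transpose_dataX_mulVec_apply (j : Fin (3 + 5 * n)) :
    ((dataX n y)ᵀ *ᵥ y) j = ∑ i, dataX n y i j * y i := by
  simp only [mulVec, dotProduct, transpose_apply]

theorem sign_transpose_dataX_mulVec_of_lt_three (hy : ∀ i, y i = 1 ∨ y i = -1) (hb : 0 < ∑ i, y i) {j : Fin (3 + 5 * n)}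
    (hj : (j : ℕ) < 3) : Real.sign (((dataX n y)ᵀ *ᵥ y) j) = 1 := by
  apply Real.sign_of_pos
  rw [transpose_dataX_mulVec_apply]
  by_cases h0 : (j : ℕ) = 0
  · have hsq (i : Fin n) : dataX n y i j * y i = 1 := by
      rcases hy i with h | h <;> simp [dataX_apply, h0, h]
    have hn : n ≠ 0 := by
      rintro rfl
      simp at hb
    simpa [hsq] using Nat.pos_of_ne_zero hn
  · have h12 : (j : ℕ) = 1 ∨ (j : ℕ) = 2 := by omega
    simpa [dataX_apply, h0, h12] using hb

theorem sign_transpose_dataX_mulVec_of_mem_featureBlock (hy : ∀ i, y i = 1 ∨ y i = -1) {i : Fin n} {j : Fin (3 + 5 * n)}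
    (hj : (j : ℕ) ∈ featureBlock y i) : Real.sign (((dataX n y)ᵀ *ᵥ y) j) = y i := by
  have h3 := three_le_of_mem_featureBlock hj
  have h0 : (j : ℕ) ≠ 0 := by omega
  have h12 : ¬((j : ℕ) = 1 ∨ (j : ℕ) = 2) := by omega
  have hu : ((dataX n y)ᵀ *ᵥ y) j = y i := by
    rw [transpose_dataX_mulVec_apply, sum_eq_single i]
    · simp [dataX_apply, h0, h12, hj]
    · intro i' _ hi'
      have hj' : (j : ℕ) ∉ featureBlock y i' := fun h => hi' (eq_of_mem_featureBlock h hj)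
      simp [dataX_apply, h0, h12, hj']
    · simp
  rw [hu, Real.sign_eq_self_of_eq_one_or_eq_neg_one (hy i)]

theorem sign_mul_dataX (hy : ∀ i, y i = 1 ∨ y i = -1) (hb : 0 < ∑ i, y i) (i : Fin n) (j : Fin (3 + 5 * n)) :
    Real.sign (((dataX n y)ᵀ *ᵥ y) j) * dataX n y i j =
      (if (j : ℕ) ∈ ({0} : Finset ℕ) then y i else 0) +
        (if (j : ℕ) ∈ ({1, 2} : Finset ℕ) then 1 else 0) +
        (if (j : ℕ) ∈ featureBlock y i then y i else 0) := by
  by_cases h3 : (j : ℕ) < 3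
  · have hj : (j : ℕ) ∉ featureBlock y i := fun h => by
      have := three_le_of_mem_featureBlock h
      omega
    rw [sign_transpose_dataX_mulVec_of_lt_three hy hb h3, dataX_apply]
    rcases (by omega : (j : ℕ) = 0 ∨ (j : ℕ) = 1 ∨ (j : ℕ) = 2) with h | h | h <;>
      rw [h] at hj <;> simp [h, hj]
  · have h0 : (j : ℕ) ≠ 0 := by omega
    have h12 : ¬((j : ℕ) = 1 ∨ (j : ℕ) = 2) := by omega
    by_cases hj : (j : ℕ) ∈ featureBlock y i
    · simp [sign_transpose_dataX_mulVec_of_mem_featureBlock hy hj, dataX_apply, h0, h12, hj]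
    · simp [dataX_apply, h0, h12, hj]

theorem sign_dotProduct_dataX (hy : ∀ i, y i = 1 ∨ y i = -1) (hb : 0 < ∑ i, y i) (i : Fin n) :
    (fun j => Real.sign (((dataX n y)ᵀ *ᵥ y) j)) ⬝ᵥ dataX n y i = 4 * y i := by
  have hlt {S : Finset ℕ} (hS : S ⊆ {0, 1, 2}) : ∀ k ∈ S, k < 3 + 5 * n := fun k hk => by
    have := mem_insert.mp (hS hk)
    simp only [mem_insert, mem_singleton] at this
    omega
  rw [dotProduct, sum_congr rfl fun j _ => sign_mul_dataX hy hb i j, sum_add_distrib,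
    sum_add_distrib, Fin.sum_ite_val_mem (hlt (by simp)), Fin.sum_ite_val_mem (hlt (by simp)),
    Fin.sum_ite_val_mem fun k => lt_of_mem_featureBlock, card_featureBlock]
  rcases hy i with h | h <;> norm_num [h]

end DataX

open Finset Matrix in
/-- In the generative model with `∑ i, y i > 0`, the vector `u = Xᵀ y` satisfies
`⟨sign u, x_i⟩ = 4 y_i` for every training example `i`; i.e.
`X · sign(Xᵀ y) = 4 • y`, so the hypothesis of the adaptive-methods lemma holds
with `c = 4`. -/
theorem sign_inner_product_training {n : ℕ} (y : Fin n → ℝ)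
    (hy : ∀ i, y i = 1 ∨ y i = -1) (hb : 0 < ∑ i, y i) :
    (∀ i, (fun j => Real.sign ((dataX n y).transpose.mulVec y j)) ⬝ᵥ (dataX n y) i =
        4 * y i) ∧
      (dataX n y).mulVec (fun j => Real.sign ((dataX n y).transpose.mulVec y j)) =
        (4 : ℝ) • y := by
  refine ⟨sign_dotProduct_dataX hy hb, funext fun i => ?_⟩
  rw [mulVec, dotProduct_comm, Pi.smul_apply, smul_eq_mul]
  exact sign_dotProduct_dataX hy hb i
end

section
/- In the generative model above with b = Σ_i y_i > 0, any vector w = τ·sign(Xᵀy) with τ > 0 satisfies ⟨w, x_test⟩ = τ(y_test + 2) > 0 for any fresh test point x_test drawn from the same distribution (whose unique features do not appear in the training set). Hence such w classifies every fresh test point as positive, and misclassifies every negative test point. -/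
/-! The first three coordinates of `Xᵀy` are `‖y‖²`, `b` and `b`, all positive, so
`sign(Xᵀy)` equals `1` there, while it vanishes on the unique features of a fresh test
point. Hence `⟨w, x_test⟩` only sees the first three coordinates: `τ (y_test + 1 + 1)`. -/

open Finset Matrix

theorem dotProduct_eq_first_three_of_disjoint_tail {R : Type*} [NonAssocSemiring R] {m : ℕ}
    (v x : Fin (3 + m) → R) (hv : ∀ j : Fin (3 + m), (j : ℕ) < 3 → v j = 1)
    (hsupp : ∀ j : Fin (3 + m), 3 ≤ (j : ℕ) → x j ≠ 0 → v j = 0) :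
    v ⬝ᵥ x = x ⟨0, by omega⟩ + x ⟨1, by omega⟩ + x ⟨2, by omega⟩ := by
  have htail : ∀ k : Fin m, v (Fin.natAdd 3 k) * x (Fin.natAdd 3 k) = 0 := by
    intro k
    by_cases hx : x (Fin.natAdd 3 k) = 0
    · rw [hx, mul_zero]
    · rw [hsupp _ (by simp) hx, zero_mul]
  rw [dotProduct, Fin.sum_univ_add, Fin.sum_univ_three]
  simp only [htail, sum_const_zero, add_zero, hv _ (Fin.castAdd_lt m _), one_mul]
  rfl

theorem dataX_transpose_mulVec_apply (n : ℕ) (y : Fin n → ℝ) (j : Fin (3 + 5 * n)) :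
    ((dataX n y)ᵀ *ᵥ y) j = ∑ i, y i * dataX n y i j := by
  rw [mulVec_transpose, vecMul, dotProduct]

theorem dataX_transpose_mulVec_of_val_eq_zero {n : ℕ} (y : Fin n → ℝ) (j : Fin (3 + 5 * n))
    (hj : (j : ℕ) = 0) :
    ((dataX n y)ᵀ *ᵥ y) j = y ⬝ᵥ y := by
  simp [dataX_transpose_mulVec_apply, dataX, hj, dotProduct]

theorem dataX_transpose_mulVec_of_val_eq_one_or_two {n : ℕ} (y : Fin n → ℝ)
    (j : Fin (3 + 5 * n)) (hj : (j : ℕ) = 1 ∨ (j : ℕ) = 2) :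
    ((dataX n y)ᵀ *ᵥ y) j = ∑ i, y i := by
  have hj0 : (j : ℕ) ≠ 0 := by omega
  simp [dataX_transpose_mulVec_apply, dataX, hj0, hj]

theorem sign_dataX_transpose_mulVec_of_lt_three {n : ℕ} (y : Fin n → ℝ) (hb : 0 < ∑ i, y i)
    (j : Fin (3 + 5 * n)) (hj : (j : ℕ) < 3) :
    Real.sign (((dataX n y)ᵀ *ᵥ y) j) = 1 := by
  apply Real.sign_of_pos
  obtain hj0 | hj12 : (j : ℕ) = 0 ∨ (j : ℕ) = 1 ∨ (j : ℕ) = 2 := by omega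
  · have hy : y ≠ 0 := by
      rintro rfl
      simp at hb
    simpa [dataX_transpose_mulVec_of_val_eq_zero y j hj0] using
      dotProduct_star_self_pos_iff.mpr hy
  · rwa [dataX_transpose_mulVec_of_val_eq_one_or_two y j hj12]

/-- In the generative model with `b = ∑ y_i > 0`, any `w = τ • sign(Xᵀ y)` with `τ > 0`
satisfies `⟨w, x_test⟩ = τ (y_test + 2) > 0` for any fresh test point (whose unique
features do not appear in training, i.e. `sign(Xᵀy)` vanishes on its nonzero
coordinates past the first three).  Hence `w` classifies every fresh test point as
positive, and in particular misclassifies every negative test point. -/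
theorem adaptive_solution_classifies_positive {n : ℕ} (y : Fin n → ℝ)
    (hb : 0 < ∑ i, y i)
    (τ : ℝ) (hτ : 0 < τ)
    (w : Fin (3 + 5 * n) → ℝ)
    (hw : w = τ • fun j => Real.sign ((dataX n y).transpose.mulVec y j))
    (ytest : ℝ) (hytest : ytest = 1 ∨ ytest = -1)
    (xtest : Fin (3 + 5 * n) → ℝ)
    (hx0 : xtest ⟨0, by omega⟩ = ytest)
    (hx1 : xtest ⟨1, by omega⟩ = 1) (hx2 : xtest ⟨2, by omega⟩ = 1)
    (hfresh : ∀ j : Fin (3 + 5 * n), 3 ≤ (j : ℕ) → xtest j ≠ 0 →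
      Real.sign ((dataX n y).transpose.mulVec y j) = 0) :
    w ⬝ᵥ xtest = τ * (ytest + 2) ∧ 0 < w ⬝ᵥ xtest ∧
      (ytest = -1 → Real.sign (w ⬝ᵥ xtest) ≠ ytest) := by
  have hdot : w ⬝ᵥ xtest = τ * (ytest + 2) := by
    rw [hw, smul_dotProduct, dotProduct_eq_first_three_of_disjoint_tail _ _
      (sign_dataX_transpose_mulVec_of_lt_three y hb) hfresh, hx0, hx1, hx2, smul_eq_mul]
    ring
  have hpos : 0 < w ⬝ᵥ xtest := by
    rw [hdot]
    rcases hytest with rfl | rfl <;> positivity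
  refine ⟨hdot, hpos, fun hneg => ?_⟩
  rw [Real.sign_of_pos hpos, hneg]
  norm_num
end

section
/- With α₊ = (4n₋+3)/D, α₋ = (4n₊+1)/D, D = 9n₊ + 3n₋ + 8n₊n₋ + 3, define m = n₊α₊ + n₋α₋ and s = n₊α₊ − n₋α₋. If n₊ > n₋/3, then m > |2s|; equivalently, for both y_test = 1 and y_test = −1, the sign of y_test·m + 2s equals y_test. -/
/-- With `α₊ = (4 n₋ + 3)/D`, `α₋ = (4 n₊ + 1)/D`, `D = 9 n₊ + 3 n₋ + 8 n₊ n₋ + 3`,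
`m = n₊ α₊ + n₋ α₋` and `s = n₊ α₊ − n₋ α₋`: if `n₊ > n₋ / 3` then `m > |2 s|`;
equivalently, for both `y_test = 1` and `y_test = −1`, the sign of
`y_test · m + 2 s` equals `y_test`. -/
theorem sgd_prediction_correct_sign (np nm : ℕ) (hnp : 0 < np) (hnm : 0 < nm)
    (h : (nm : ℝ) / 3 < np) :
    let D : ℝ := 9 * np + 3 * nm + 8 * np * nm + 3
    let αp : ℝ := (4 * nm + 3) / D
    let αm : ℝ := (4 * np + 1) / D
    let m : ℝ := np * αp + nm * αm
    let s : ℝ := np * αp - nm * αm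
    |2 * s| < m ∧ ∀ yt : ℝ, yt = 1 ∨ yt = -1 → Real.sign (yt * m + 2 * s) = yt := by
  intro D αp αm m s
  have hnp1 : (1:ℝ) ≤ np := by exact_mod_cast hnp
  have hnm1 : (1:ℝ) ≤ nm := by exact_mod_cast hnm
  have hD : (0:ℝ) < D := by
    have h1 : (0:ℝ) ≤ (np:ℝ) := by positivity
    have h2 : (0:ℝ) ≤ (nm:ℝ) := by positivity
    simp only [D]; nlinarith
  have hseq : s = (3 * np - nm) / D := by
    simp only [s, αp, αm]
    field_simp
    ring
  have hmeq : m = (8 * np * nm + 3 * np + nm) / D := by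
    simp only [m, αp, αm]
    field_simp
    ring
  have hs : 0 < s := by
    rw [hseq]
    apply div_pos _ hD
    linarith
  have hms : 2 * s < m := by
    rw [hseq, hmeq, ← mul_div_assoc, div_lt_div_iff₀ hD hD]
    nlinarith [mul_lt_mul_of_pos_right (show 2 * (3 * (np:ℝ) - nm) < 8 * np * nm + 3 * np + nm by nlinarith) hD]
  have hm : 0 < m := by linarith
  refine ⟨?_, ?_⟩
  · rw [abs_of_pos (by linarith)]; exact hms
  · rintro yt (rfl | rfl)
    · rw [Real.sign_of_pos (by linarith)]
    · rw [Real.sign_of_neg (by nlinarith)]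
end
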